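/- arXiv:1503.06460 — 2 statements merged into one kernel-verified Lean document; each statement's English description precedes it below -/
import Mathlib

section
/- If μ̄ is a W₂-barycenter of a probability measure Ω on P(M) and W₂-barycenters of (1/2)δ_{μ̄} + (1/2)Ω are unique up to the variational characterization, then μ̄ is the unique W₂-barycenter of the measure (1/2)δ_{μ̄} + (1/2)Ω. More precisely: for every ν ∈ P(M), (1/2)W₂²(ν,μ̄) + (1/2)∫ W₂²(μ,ν) dΩ(μ) ≥ (1/2)∫ W₂²(μ,μ̄) dΩ(μ), with equality iff ν = μ̄. -/
open MeasureTheory Set Filter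

/-- The variance of a measure on a metric space: the infimal second moment. -/
noncomputable def var {M : Type*} [MetricSpace M] [MeasurableSpace M] (mu : Measure M) : ℝ :=
  ⨅ y : M, ∫ x, dist x y ^ 2 ∂mu

/-- The squared 2-Wasserstein distance, as the infimal quadratic transport cost over couplings. -/
noncomputable def W2sq {M : Type*} [MetricSpace M] [MeasurableSpace M] (mu nu : Measure M) : ℝ :=
  sInf ((fun gamma : Measure (M × M) => ∫ p, dist p.1 p.2 ^ 2 ∂gamma) ''
    {gamma | gamma.map Prod.fst = mu ∧ gamma.map Prod.snd = nu})

/-!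
The barycenter inequality for `Ω` gives `∫ W₂²(μ, μ̄) dΩ ≤ ∫ W₂²(μ, ν) dΩ`, so adding
`W₂²(ν, μ̄) ≥ 0` yields the inequality, with equality exactly when `W₂²(ν, μ̄) = 0`.
The real content is that `W₂²` vanishes only on the diagonal: on a compact space a continuous `g`
satisfies `|g x - g y| ≤ ε + K d(x, y)²`, so a coupling of `ν` and `μ̄` of transport cost
below `ε / K` shows `|∫ g dν - ∫ g dμ̄| ≤ 2ε`.
-/

open scoped BoundedContinuousFunction

lemma BoundedContinuousFunction.exists_abs_sub_le_add_mul_dist_sq {α : Type*}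
    [PseudoMetricSpace α] {g : α →ᵇ ℝ} (hg : UniformContinuous g) {ε : ℝ} (hε : 0 < ε) :
    ∃ K > 0, ∀ x y, |g x - g y| ≤ ε + K * dist x y ^ 2 := by
  obtain ⟨δ, hδ, hclose⟩ := Metric.uniformContinuous_iff.mp hg ε hε
  refine ⟨(2 * ‖g‖ + 1) / δ ^ 2, by positivity, fun x y => ?_⟩
  have hK : 0 ≤ (2 * ‖g‖ + 1) / δ ^ 2 * dist x y ^ 2 := by positivity
  rcases lt_or_ge (dist x y) δ with hnear | hfar
  · have := (hclose hnear).le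
    rw [Real.dist_eq] at this
    linarith
  · have hbound : |g x - g y| ≤ 2 * ‖g‖ := by
      simpa only [Real.dist_eq] using g.dist_le_two_norm x y
    have : 2 * ‖g‖ + 1 ≤ (2 * ‖g‖ + 1) / δ ^ 2 * dist x y ^ 2 := by
      rw [div_mul_eq_mul_div, le_div_iff₀ (by positivity)]
      gcongr
    linarith

section W2sq

variable {M : Type*} [MetricSpace M] [MeasurableSpace M]

lemma W2sq_nonneg (μ ν : Measure M) : 0 ≤ W2sq μ ν :=
  Real.sInf_nonneg <| by rintro _ ⟨γ, -, rfl⟩; positivity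

lemma W2sq_le_of_map_fst_of_map_snd {μ ν : Measure M} {γ : Measure (M × M)}
    (hfst : γ.map Prod.fst = μ) (hsnd : γ.map Prod.snd = ν) :
    W2sq μ ν ≤ ∫ p, dist p.1 p.2 ^ 2 ∂γ :=
  csInf_le ⟨0, by rintro _ ⟨γ, -, rfl⟩; positivity⟩ ⟨γ, ⟨hfst, hsnd⟩, rfl⟩

lemma exists_coupling_of_W2sq_lt (μ ν : Measure M) [IsProbabilityMeasure μ]
    [IsProbabilityMeasure ν] {c : ℝ} (h : W2sq μ ν < c) :
    ∃ γ : Measure (M × M), γ.map Prod.fst = μ ∧ γ.map Prod.snd = ν ∧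
      ∫ p, dist p.1 p.2 ^ 2 ∂γ < c := by
  have hprod : {γ : Measure (M × M) | γ.map Prod.fst = μ ∧ γ.map Prod.snd = ν}.Nonempty :=
    ⟨μ.prod ν, by simp, by simp⟩
  obtain ⟨_, ⟨γ, ⟨hfst, hsnd⟩, rfl⟩, hlt⟩ := exists_lt_of_csInf_lt (hprod.image _) h
  exact ⟨γ, hfst, hsnd, hlt⟩

variable [OpensMeasurableSpace M] [SecondCountableTopology M]

lemma W2sq_self (μ : Measure M) : W2sq μ μ = 0 := by
  have hdiag : Measurable fun x : M => (x, x) := measurable_id.prodMk measurable_id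
  refine le_antisymm ?_ (W2sq_nonneg μ μ)
  calc W2sq μ μ ≤ ∫ p, dist p.1 p.2 ^ 2 ∂μ.map fun x => (x, x) :=
        W2sq_le_of_map_fst_of_map_snd
          (by rw [Measure.map_map measurable_fst hdiag]; exact Measure.map_id)
          (by rw [Measure.map_map measurable_snd hdiag]; exact Measure.map_id)
    _ = 0 := by
      rw [integral_map hdiag.aemeasurable (by fun_prop)]
      simp

end W2sq

section Compact

variable {M : Type*} [MetricSpace M] [CompactSpace M] [MeasurableSpace M] [BorelSpace M]

lemma abs_integral_map_fst_sub_integral_map_snd_le (γ : Measure (M × M))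
    [IsProbabilityMeasure γ] (g : M →ᵇ ℝ) {ε K : ℝ}
    (hgK : ∀ x y, |g x - g y| ≤ ε + K * dist x y ^ 2) :
    |∫ x, g x ∂γ.map Prod.fst - ∫ x, g x ∂γ.map Prod.snd| ≤
      ε + K * ∫ p, dist p.1 p.2 ^ 2 ∂γ := by
  have hcont : Continuous fun p : M × M => dist p.1 p.2 ^ 2 := by fun_prop
  have hcost : Integrable (fun p : M × M => dist p.1 p.2 ^ 2) γ :=
    (BoundedContinuousFunction.mkOfCompact ⟨_, hcont⟩).integrable γ
  have hfst : Integrable (fun p : M × M => g p.1) γ :=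
    (g.compContinuous ⟨Prod.fst, continuous_fst⟩).integrable γ
  have hsnd : Integrable (fun p : M × M => g p.2) γ :=
    (g.compContinuous ⟨Prod.snd, continuous_snd⟩).integrable γ
  rw [integral_map measurable_fst.aemeasurable g.continuous.aestronglyMeasurable,
    integral_map measurable_snd.aemeasurable g.continuous.aestronglyMeasurable,
    ← integral_sub hfst hsnd]
  calc |∫ p, g p.1 - g p.2 ∂γ| ≤ ∫ p, |g p.1 - g p.2| ∂γ := abs_integral_le_integral_abs
    _ ≤ ∫ p, ε + K * dist p.1 p.2 ^ 2 ∂γ :=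
        integral_mono (hfst.sub hsnd).abs ((integrable_const ε).add (hcost.const_mul K))
          fun p => hgK p.1 p.2
    _ = ε + K * ∫ p, dist p.1 p.2 ^ 2 ∂γ := by
        rw [integral_add (integrable_const ε) (hcost.const_mul K), integral_const_mul]
        simp

lemma integral_eq_of_W2sq_eq_zero {μ ν : Measure M} [IsProbabilityMeasure μ]
    [IsProbabilityMeasure ν] (h : W2sq μ ν = 0) (g : M →ᵇ ℝ) :
    ∫ x, g x ∂μ = ∫ x, g x ∂ν := by
  refine eq_of_forall_dist_le fun ε hε => ?_
  obtain ⟨K, hK, hgK⟩ := g.exists_abs_sub_le_add_mul_dist_sq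
    (CompactSpace.uniformContinuous_of_continuous g.continuous) (half_pos hε)
  obtain ⟨γ, rfl, rfl, hcost⟩ :=
    exists_coupling_of_W2sq_lt μ ν (c := ε / 2 / K) (by rw [h]; positivity)
  have := Measure.isProbabilityMeasure_of_map (μ := γ) Prod.fst
  calc dist _ _ ≤ ε / 2 + K * ∫ p, dist p.1 p.2 ^ 2 ∂γ :=
        abs_integral_map_fst_sub_integral_map_snd_le γ g hgK
    _ ≤ ε / 2 + K * (ε / 2 / K) := by gcongr
    _ = ε := by field_simp; ring

lemma W2sq_eq_zero_iff {μ ν : Measure M} [IsProbabilityMeasure μ] [IsProbabilityMeasure ν] :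
    W2sq μ ν = 0 ↔ μ = ν :=
  ⟨fun h => ext_of_forall_integral_eq_of_IsFiniteMeasure (integral_eq_of_W2sq_eq_zero h),
    fun h => h ▸ W2sq_self μ⟩

end Compact

theorem barycenter_of_half_dirac_add_half_general {M : Type*} [MetricSpace M] [CompactSpace M]
    [MeasurableSpace M] [BorelSpace M]
    [MeasurableSpace (ProbabilityMeasure M)]
    (Ω : ProbabilityMeasure (ProbabilityMeasure M)) (μb : ProbabilityMeasure M)
    (hbc : ∀ ν : ProbabilityMeasure M,
      ∫ μ, W2sq (μ : Measure M) (μb : Measure M) ∂(Ω : Measure (ProbabilityMeasure M)) ≤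
      ∫ μ, W2sq (μ : Measure M) (ν : Measure M) ∂(Ω : Measure (ProbabilityMeasure M))) :
    ∀ ν : ProbabilityMeasure M,
      ((1 / 2) * ∫ μ, W2sq (μ : Measure M) (μb : Measure M) ∂(Ω : Measure (ProbabilityMeasure M)) ≤
        (1 / 2) * W2sq (ν : Measure M) (μb : Measure M) +
        (1 / 2) * ∫ μ, W2sq (μ : Measure M) (ν : Measure M) ∂(Ω : Measure (ProbabilityMeasure M))) ∧
      ((1 / 2) * W2sq (ν : Measure M) (μb : Measure M) +
        (1 / 2) * ∫ μ, W2sq (μ : Measure M) (ν : Measure M) ∂(Ω : Measure (ProbabilityMeasure M)) =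
        (1 / 2) * ∫ μ, W2sq (μ : Measure M) (μb : Measure M) ∂(Ω : Measure (ProbabilityMeasure M))
        ↔ ν = μb) := by
  intro ν
  have hdist := W2sq_nonneg (ν : Measure M) (μb : Measure M)
  have hbar := hbc ν
  refine ⟨by linarith, fun hequal => ?_, ?_⟩
  · exact ProbabilityMeasure.toMeasure_injective <| W2sq_eq_zero_iff.mp <| by linarith
  · rintro rfl
    rw [W2sq_self]
    ring

/-- If `μ̄` is a `W₂`-barycenter of `Ω`, then `μ̄` is the unique `W₂`-barycenter of
`(1/2)δ_{μ̄} + (1/2)Ω`: for every `ν`,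
`(1/2)W₂²(ν,μ̄) + (1/2)∫ W₂²(μ,ν) dΩ(μ) ≥ (1/2)∫ W₂²(μ,μ̄) dΩ(μ)`,
with equality iff `ν = μ̄`. -/
theorem barycenter_of_half_dirac_add_half {M : Type*} [MetricSpace M] [CompactSpace M]
    [Nonempty M] [MeasurableSpace M] [BorelSpace M]
    [MeasurableSpace (ProbabilityMeasure M)] [BorelSpace (ProbabilityMeasure M)]
    (Ω : ProbabilityMeasure (ProbabilityMeasure M)) (μb : ProbabilityMeasure M)
    (hbc : ∀ ν : ProbabilityMeasure M,
      ∫ μ, W2sq (μ : Measure M) (μb : Measure M) ∂(Ω : Measure (ProbabilityMeasure M)) ≤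
      ∫ μ, W2sq (μ : Measure M) (ν : Measure M) ∂(Ω : Measure (ProbabilityMeasure M))) :
    ∀ ν : ProbabilityMeasure M,
      ((1 / 2) * ∫ μ, W2sq (μ : Measure M) (μb : Measure M) ∂(Ω : Measure (ProbabilityMeasure M)) ≤
        (1 / 2) * W2sq (ν : Measure M) (μb : Measure M) +
        (1 / 2) * ∫ μ, W2sq (μ : Measure M) (ν : Measure M) ∂(Ω : Measure (ProbabilityMeasure M))) ∧
      ((1 / 2) * W2sq (ν : Measure M) (μb : Measure M) +
        (1 / 2) * ∫ μ, W2sq (μ : Measure M) (ν : Measure M) ∂(Ω : Measure (ProbabilityMeasure M)) =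
        (1 / 2) * ∫ μ, W2sq (μ : Measure M) (μb : Measure M) ∂(Ω : Measure (ProbabilityMeasure M))
        ↔ ν = μb) :=
  barycenter_of_half_dirac_add_half_general Ω μb hbc
end

section
/- The barycenter of the orbit equals the W₂-projection onto the invariant set: with G, H, μ, Ω_μ as before and μ̄ the unique W₂-barycenter of Ω_μ, μ̄ is the unique minimizer of W₂²(ν, μ) over all ν in the G-invariant set I_G = {ν ∈ P(M) : g_# ν = ν for all g ∈ G}. -/
open MeasureTheory Set Filter

/-!
An isometry acts on couplings without changing their cost, so `W₂²` is invariant under the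
diagonal action of `G`. By left invariance of `H`, the barycentric functional
`F ρ = ∫ W₂²(g • μ, ρ) dH(g)` is then `G`-invariant, so uniqueness of its minimizer `μ̄` makes
`μ̄` invariant. On an invariant `ρ` every term of the integral equals `W₂²(μ, ρ)`, so on `I_G`
the functional `F` is `W₂²(·, μ)`, and `μ̄`, minimizing `F` over all measures, minimizes it there.
-/

section Wasserstein

variable {M N : Type*} [MetricSpace M] [MeasurableSpace M] [MetricSpace N] [MeasurableSpace N]

def couplingCosts (α β : Measure M) : Set ℝ :=
  (fun γ : Measure (M × M) => ∫ p, dist p.1 p.2 ^ 2 ∂γ) ''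
    {γ | γ.map Prod.fst = α ∧ γ.map Prod.snd = β}

theorem couplingCosts_subset_swap (α β : Measure M) : couplingCosts α β ⊆ couplingCosts β α := by
  rintro _ ⟨γ, ⟨hfst, hsnd⟩, rfl⟩
  let e : M × M ≃ᵐ M × M := MeasurableEquiv.prodComm
  refine ⟨γ.map e, ⟨?_, ?_⟩, ?_⟩
  · rwa [Measure.map_map measurable_fst e.measurable]
  · rwa [Measure.map_map measurable_snd e.measurable]
  · simp only [integral_map_equiv]
    exact integral_congr_ae (.of_forall fun p => by simp [e, MeasurableEquiv.prodComm, dist_comm])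

theorem W2sq_comm (α β : Measure M) : W2sq α β = W2sq β α :=
  congrArg sInf <| (couplingCosts_subset_swap α β).antisymm (couplingCosts_subset_swap β α)

theorem couplingCosts_subset_map (e : M ≃ᵐ N) (he : ∀ x y, dist (e x) (e y) = dist x y)
    (α β : Measure M) : couplingCosts α β ⊆ couplingCosts (α.map e) (β.map e) := by
  rintro _ ⟨γ, ⟨hfst, hsnd⟩, rfl⟩
  refine ⟨γ.map (e.prodCongr e), ⟨?_, ?_⟩, ?_⟩
  · rw [← hfst, Measure.map_map measurable_fst (e.prodCongr e).measurable,
      Measure.map_map e.measurable measurable_fst]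
    rfl
  · rw [← hsnd, Measure.map_map measurable_snd (e.prodCongr e).measurable,
      Measure.map_map e.measurable measurable_snd]
    rfl
  · simp only [integral_map_equiv]
    exact integral_congr_ae (.of_forall fun p => by simp [MeasurableEquiv.prodCongr, he])

theorem W2sq_map_measurableEquiv (e : M ≃ᵐ N) (he : ∀ x y, dist (e x) (e y) = dist x y)
    (α β : Measure M) : W2sq (α.map e) (β.map e) = W2sq α β := by
  have he_symm : ∀ x y, dist (e.symm x) (e.symm y) = dist x y := fun x y => by
    rw [← he, e.apply_symm_apply, e.apply_symm_apply]
  refine congrArg sInf <| Subset.antisymm ?_ (couplingCosts_subset_map e he α β)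
  have h := couplingCosts_subset_map e.symm he_symm (α.map e) (β.map e)
  rwa [e.map_symm_map, e.map_symm_map] at h

end Wasserstein

section Orbit

variable {M G : Type*} [MetricSpace M] [MeasurableSpace M] [Group G] [MulAction G M]
  [MeasurableConstSMul G M] [IsIsometricSMul G M]

theorem W2sq_map_smul (g : G) (α β : Measure M) :
    W2sq (α.map (g • ·)) (β.map (g • ·)) = W2sq α β :=
  W2sq_map_measurableEquiv (MeasurableEquiv.smul g) (dist_smul g) α β

theorem W2sq_map_smul_left_of_invariant {ρ : Measure M} (hρ : ∀ g : G, ρ.map (g • ·) = ρ)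
    (g : G) (α : Measure M) : W2sq (α.map (g • ·)) ρ = W2sq α ρ := by
  rw [← W2sq_map_smul g α ρ, hρ g]

variable [MeasurableSpace G]

theorem integral_W2sq_map_smul_of_invariant (H : Measure G) [IsProbabilityMeasure H]
    {ρ : Measure M} (hρ : ∀ g : G, ρ.map (g • ·) = ρ) (α : Measure M) :
    ∫ g, W2sq (α.map (g • ·)) ρ ∂H = W2sq α ρ := by
  simp [W2sq_map_smul_left_of_invariant hρ]

theorem integral_W2sq_map_smul_right [MeasurableMul G] (H : Measure G) [H.IsMulLeftInvariant]
    (g₀ : G) (α ρ : Measure M) :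
    ∫ g, W2sq (α.map (g • ·)) (ρ.map (g₀ • ·)) ∂H = ∫ g, W2sq (α.map (g • ·)) ρ ∂H := by
  have hmeas : ∀ g : G, Measurable (g • · : M → M) := measurable_const_smul
  calc ∫ g, W2sq (α.map (g • ·)) (ρ.map (g₀ • ·)) ∂H
      = ∫ g, W2sq (α.map ((g₀⁻¹ * g) • ·)) ρ ∂H := by
        refine integral_congr_ae (.of_forall fun g => ?_)
        dsimp only
        rw [← W2sq_map_smul g₀⁻¹, Measure.map_map (hmeas _) (hmeas _),
          Measure.map_map (hmeas _) (hmeas _)]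
        simp [Function.comp_def, mul_smul]
    _ = ∫ g, W2sq (α.map (g • ·)) ρ ∂H :=
        integral_mul_left_eq_self (fun g => W2sq (α.map (g • ·)) ρ) g₀⁻¹

end Orbit

theorem orbit_barycenter_is_W2_projection_general {M : Type*} [MetricSpace M]
    [MeasurableSpace M] [BorelSpace M]
    {G : Type*} [Group G]
    [MeasurableSpace G] [MeasurableMul G]
    (H : Measure G) [IsProbabilityMeasure H] [H.IsMulLeftInvariant]
    [MulAction G M] (hiso : ∀ g : G, Isometry (fun x : M => g • x))
    (μ : Measure M)
    (μb : Measure M) [IsProbabilityMeasure μb]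
    (hbc : ∀ ν : Measure M, IsProbabilityMeasure ν →
      ∫ g, W2sq (μ.map (fun x => g • x)) μb ∂H ≤ ∫ g, W2sq (μ.map (fun x => g • x)) ν ∂H)
    (huniq : ∀ ν : Measure M, IsProbabilityMeasure ν →
      (∫ g, W2sq (μ.map (fun x => g • x)) ν ∂H =
        ∫ g, W2sq (μ.map (fun x => g • x)) μb ∂H) → ν = μb) :
    (∀ g : G, μb.map (fun x => g • x) = μb) ∧
    ∀ ν : Measure M, IsProbabilityMeasure ν → (∀ g : G, ν.map (fun x => g • x) = ν) →
      (W2sq μb μ ≤ W2sq ν μ ∧ (W2sq ν μ = W2sq μb μ → ν = μb)) := by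
  have : IsIsometricSMul G M := ⟨hiso⟩
  have : MeasurableConstSMul G M := ⟨fun g => (hiso g).continuous.measurable⟩
  have hμb_inv : ∀ g : G, μb.map (g • ·) = μb := fun g =>
    huniq _ (Measure.isProbabilityMeasure_map (measurable_const_smul g).aemeasurable)
      (integral_W2sq_map_smul_right H g μ μb)
  have hcost : ∀ ρ : Measure M, (∀ g : G, ρ.map (g • ·) = ρ) →
      ∫ g, W2sq (μ.map (g • ·)) ρ ∂H = W2sq ρ μ := fun ρ hρ =>
    (integral_W2sq_map_smul_of_invariant H hρ μ).trans (W2sq_comm μ ρ)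
  refine ⟨hμb_inv, fun ν hν hν_inv => ?_⟩
  rw [← hcost μb hμb_inv, ← hcost ν hν_inv]
  exact ⟨hbc ν hν, huniq ν hν⟩

/-- The unique `W₂`-barycenter of the orbit measure equals the `W₂`-projection of `μ`
onto the set `I_G` of `G`-invariant measures: it lies in `I_G` and is the unique
minimizer of `ν ↦ W₂²(ν, μ)` over `I_G`. -/
theorem orbit_barycenter_is_W2_projection {M : Type*} [MetricSpace M] [CompactSpace M]
    [Nonempty M] [MeasurableSpace M] [BorelSpace M]
    {G : Type*} [Group G] [TopologicalSpace G] [IsTopologicalGroup G] [CompactSpace G]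
    [MeasurableSpace G] [BorelSpace G] [MeasurableMul G]
    (H : Measure G) [IsProbabilityMeasure H] [H.IsMulLeftInvariant]
    [MulAction G M] (hiso : ∀ g : G, Isometry (fun x : M => g • x))
    (μ : Measure M) [IsProbabilityMeasure μ]
    (μb : Measure M) [IsProbabilityMeasure μb]
    (hbc : ∀ ν : Measure M, IsProbabilityMeasure ν →
      ∫ g, W2sq (μ.map (fun x => g • x)) μb ∂H ≤ ∫ g, W2sq (μ.map (fun x => g • x)) ν ∂H)
    (huniq : ∀ ν : Measure M, IsProbabilityMeasure ν →
      (∫ g, W2sq (μ.map (fun x => g • x)) ν ∂H =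
        ∫ g, W2sq (μ.map (fun x => g • x)) μb ∂H) → ν = μb) :
    (∀ g : G, μb.map (fun x => g • x) = μb) ∧
    ∀ ν : Measure M, IsProbabilityMeasure ν → (∀ g : G, ν.map (fun x => g • x) = ν) →
      (W2sq μb μ ≤ W2sq ν μ ∧ (W2sq ν μ = W2sq μb μ → ν = μb)) :=
  orbit_barycenter_is_W2_projection_general H hiso μ μb hbc huniq
end
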